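/- For any ε > 0 and any fixed nonnegative inversive distances, there exists l > 0 such that in any (generalized) hyperbolic inversive-distance triangle with radii r_i, r_j, r_k > 0 and r_i > l, the (extended) inner angle θ̃_i at vertex i is smaller than ε. -/

import Mathlib

/-!
Write `X, Y, Z` for the hyperbolic cosines of the edges `ij, ik, jk`. With nonnegative inversive
distances, `X ≥ cosh rᵢ cosh rⱼ`, `Y ≥ cosh rᵢ cosh rₖ` and `Z ≤ (1 + Iⱼₖ) cosh rⱼ cosh rₖ`, so
`Z / (X Y) ≤ (1 + Iⱼₖ) / cosh² rᵢ`. Since `sinh < cosh`, the cosine of the angle at `i`,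
`(X Y - Z) / (sinh · sinh)`, is then at least `1 - (1 + Iⱼₖ) / cosh² rᵢ` as soon as this is
nonnegative, which tends to `1` as `rᵢ → ∞`; hence the angle tends to `0`, uniformly in `rⱼ, rₖ`.
-/

open Real

noncomputable def Lambda (x : ℝ) : ℝ :=
  if x ≤ -1 then π else if x ≤ 1 then arccos x else 0

noncomputable def arcosh (x : ℝ) : ℝ := Real.log (x + Real.sqrt (x ^ 2 - 1))

/-- Hyperbolic edge length of two circles of radii `r, s` with inversive distance `I`. -/
noncomputable def hlen (r s I : ℝ) : ℝ :=
  _root_.arcosh (Real.cosh r * Real.cosh s + I * Real.sinh r * Real.sinh s)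

/-- Hyperbolic law of cosines: the cosine of the angle between the sides `a` and `b`. -/
noncomputable def cosAngle (a b c : ℝ) : ℝ :=
  (cosh a * cosh b - cosh c) / (sinh a * sinh b)

theorem Lambda_lt_of_cos_lt {x θ : ℝ} (hθ : 0 < θ) (hθπ : θ ≤ π) (h : cos θ < x) :
    Lambda x < θ := by
  unfold Lambda
  split_ifs with hx₁ hx₂
  · linarith [neg_one_le_cos θ]
  · calc arccos x < arccos (cos θ) := arccos_lt_arccos (neg_one_le_cos θ) h hx₂
      _ = θ := arccos_cos hθ.le hθπ
  · exact hθ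

theorem lt_cosAngle {a b c m : ℝ} (ha : 0 < a) (hb : 0 < b) (hm : 0 ≤ m)
    (h : m < 1 - cosh c / (cosh a * cosh b)) : m < cosAngle a b c := by
  have hP : 0 < cosh a * cosh b := by positivity
  have hS : 0 < sinh a * sinh b := mul_pos (sinh_pos_iff.2 ha) (sinh_pos_iff.2 hb)
  have hSP : sinh a * sinh b ≤ cosh a * cosh b :=
    mul_le_mul (sinh_lt_cosh a).le (sinh_lt_cosh b).le (sinh_pos_iff.2 hb).le (cosh_pos a).le
  rw [lt_sub_iff_add_lt, ← lt_sub_iff_add_lt', div_lt_iff₀ hP] at h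
  rw [cosAngle, lt_div_iff₀ hS]
  nlinarith

section hlen

variable {r s I : ℝ}

theorem one_le_hlen_arg (hI : 0 ≤ I) (hr : 0 ≤ r) (hs : 0 ≤ s) :
    1 ≤ cosh r * cosh s + I * sinh r * sinh s := by
  have : 0 ≤ I * sinh r * sinh s := by
    have := sinh_nonneg_iff.2 hr; have := sinh_nonneg_iff.2 hs; positivity
  nlinarith [one_le_cosh r, one_le_cosh s]

theorem cosh_hlen (hI : 0 ≤ I) (hr : 0 ≤ r) (hs : 0 ≤ s) :
    cosh (hlen r s I) = cosh r * cosh s + I * sinh r * sinh s :=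
  Real.cosh_arcosh (one_le_hlen_arg hI hr hs)

theorem hlen_pos (hI : 0 ≤ I) (hr : 0 < r) (hs : 0 ≤ s) : 0 < hlen r s I := by
  refine Real.arcosh_pos ?_
  have : 0 ≤ I * sinh r * sinh s := by
    have := sinh_pos_iff.2 hr; have := sinh_nonneg_iff.2 hs; positivity
  nlinarith [one_lt_cosh.2 hr.ne', one_le_cosh s]

theorem cosh_mul_cosh_le_cosh_hlen (hI : 0 ≤ I) (hr : 0 ≤ r) (hs : 0 ≤ s) :
    cosh r * cosh s ≤ cosh (hlen r s I) := by
  rw [cosh_hlen hI hr hs]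
  have := sinh_nonneg_iff.2 hr; have := sinh_nonneg_iff.2 hs
  have : 0 ≤ I * sinh r * sinh s := by positivity
  linarith

theorem cosh_hlen_le (hI : 0 ≤ I) (hr : 0 ≤ r) (hs : 0 ≤ s) :
    cosh (hlen r s I) ≤ (1 + I) * (cosh r * cosh s) := by
  rw [cosh_hlen hI hr hs]
  have : sinh r * sinh s ≤ cosh r * cosh s :=
    mul_le_mul (sinh_lt_cosh r).le (sinh_lt_cosh s).le (sinh_nonneg_iff.2 hs) (cosh_pos r).le
  nlinarith

end hlen

theorem cosh_hlen_div_le {ri rj rk Iij Ijk Iik : ℝ} (hIij : 0 ≤ Iij) (hIjk : 0 ≤ Ijk)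
    (hIik : 0 ≤ Iik) (hri : 0 ≤ ri) (hrj : 0 ≤ rj) (hrk : 0 ≤ rk) :
    cosh (hlen rj rk Ijk) / (cosh (hlen ri rj Iij) * cosh (hlen ri rk Iik)) ≤
      (1 + Ijk) / cosh ri ^ 2 := by
  have hi := cosh_pos ri; have hj := cosh_pos rj; have hk := cosh_pos rk
  calc cosh (hlen rj rk Ijk) / (cosh (hlen ri rj Iij) * cosh (hlen ri rk Iik))
      ≤ (1 + Ijk) * (cosh rj * cosh rk) / ((cosh ri * cosh rj) * (cosh ri * cosh rk)) :=
        div_le_div₀ (by positivity) (cosh_hlen_le hIjk hrj hrk) (by positivity)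
          (mul_le_mul (cosh_mul_cosh_le_cosh_hlen hIij hri hrj)
            (cosh_mul_cosh_le_cosh_hlen hIik hri hrk) (by positivity)
            ((mul_pos hi hj).le.trans (cosh_mul_cosh_le_cosh_hlen hIij hri hrj)))
    _ = (1 + Ijk) / cosh ri ^ 2 := by field_simp

theorem exists_forall_lt_cosh_sq (K : ℝ) : ∃ l > 0, ∀ r, l < r → K < cosh r ^ 2 := by
  have hK : 1 < max K 1 + 1 := by linarith [le_max_right K 1]
  refine ⟨Real.arcosh (max K 1 + 1), Real.arcosh_pos hK, fun r hr => ?_⟩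
  have hl := Real.arcosh_pos hK
  have : max K 1 + 1 < cosh r := by
    rw [← Real.cosh_arcosh hK.le, cosh_lt_cosh, abs_of_pos hl, abs_of_pos (hl.trans hr)]
    exact hr
  nlinarith [le_max_left K 1, le_max_right K 1]

/-- Key estimate (Lemma 3.3): for any `ε > 0` and fixed nonnegative inversive
distances, there is `l > 0` such that in any generalized hyperbolic inversive-distance
triangle with `r_i > l`, the extended inner angle `θ̃_i` is smaller than `ε`. -/
theorem large_radius_small_angle (ε Iij Ijk Iik : ℝ) (hε : 0 < ε)
    (hIij : 0 ≤ Iij) (hIjk : 0 ≤ Ijk) (hIik : 0 ≤ Iik) :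
    ∃ l : ℝ, 0 < l ∧ ∀ ri rj rk : ℝ, 0 < ri → 0 < rj → 0 < rk → l < ri →
      Lambda ((Real.cosh (hlen ri rj Iij) * Real.cosh (hlen ri rk Iik)
          - Real.cosh (hlen rj rk Ijk)) /
        (Real.sinh (hlen ri rj Iij) * Real.sinh (hlen ri rk Iik))) < ε := by
  set θ := min ε (π / 2)
  have hθ : 0 < θ := lt_min hε (by linarith [pi_pos])
  have hθπ : θ ≤ π / 2 := min_le_right _ _
  have hcos₀ : 0 ≤ cos θ := cos_nonneg_of_mem_Icc ⟨by linarith, hθπ⟩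
  have hcos₁ : cos θ < 1 := by
    simpa using cos_lt_cos_of_nonneg_of_le_pi le_rfl (by linarith [pi_pos]) hθ
  obtain ⟨l, hl, hcosh⟩ := exists_forall_lt_cosh_sq ((1 + Ijk) / (1 - cos θ))
  refine ⟨l, hl, fun ri rj rk hri hrj hrk hlri => ?_⟩
  have hK : (1 + Ijk) / cosh ri ^ 2 < 1 - cos θ := by
    have := hcosh ri hlri
    rw [div_lt_iff₀ (sub_pos.2 hcos₁)] at this
    rw [div_lt_iff₀ (by positivity)]
    linarith
  refine (Lambda_lt_of_cos_lt hθ (by linarith [pi_pos]) ?_).trans_le (min_le_left _ _)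
  refine lt_cosAngle (hlen_pos hIij hri hrj.le) (hlen_pos hIik hri hrk.le) hcos₀ ?_
  linarith [cosh_hlen_div_le hIij hIjk hIik hri.le hrj.le hrk.le]
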